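/- arXiv:2506.21092 — 12 statements merged into one kernel-verified Lean document; each statement's English description precedes it below -/
import Mathlib

section
/- For every nonzero complex number b and every point (q₁,p₁,q₂,p₂) ∈ ℂ⁴ with q₁p₁q₂p₂ ≠ 0, the determinant of the 4×4 Jacobian matrix of partial derivatives of the four components of φ with respect to (q₁,p₁,q₂,p₂) equals (1+b·q₁)(1+b·q₂)/(q₁q₂p₁p₂)². -/
/-! The second and fourth components of φ are the coordinates q₂ and q₁, so the second and fourth
rows of the Jacobian are standard basis vectors. Expanding along them leaves the single term
∂φ₁/∂p₂ · ∂φ₃/∂p₁, and each factor is the derivative of a constant multiple of t⁻¹. -/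

open Matrix

theorem Matrix.det_fin_four_of_two_unit_rows {R : Type*} [CommRing R] (a c d e f g h : R) :
    !![a, 0, c, d; 0, 0, 1, 0; e, f, g, h; 1, 0, 0, 0].det = d * f := by
  simp [det_succ_row_zero, Fin.sum_univ_succ, Fin.succAbove]
  ring

theorem deriv_const_div_const_mul {𝕜 : Type*} [NontriviallyNormedField 𝕜] (c k x : 𝕜) :
    deriv (fun t => c / (k * t)) x = -c / (k * x ^ 2) := by
  have hfun : (fun t => c / (k * t)) = fun t => c / k * t⁻¹ := by
    funext t
    rw [div_mul_eq_div_div, div_eq_mul_inv]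
  rw [hfun, deriv_const_mul_field, deriv_inv]
  ring

theorem jacobian_det_of_phi_general (b : ℂ) (q1 p1 q2 p2 : ℂ) :
    (!![deriv (fun t => (1 + b * q2) / (t * q2 * p2)) q1,
        deriv (fun _t => (1 + b * q2) / (q1 * q2 * p2)) p1,
        deriv (fun t => (1 + b * t) / (q1 * t * p2)) q2,
        deriv (fun t => (1 + b * q2) / (q1 * q2 * t)) p2;
        deriv (fun _t => q2) q1,
        deriv (fun _t => q2) p1,
        deriv (fun t : ℂ => t) q2,
        deriv (fun _t => q2) p2;
        deriv (fun t => (1 + b * t) / (t * p1 * q2)) q1,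
        deriv (fun t => (1 + b * q1) / (q1 * t * q2)) p1,
        deriv (fun t => (1 + b * q1) / (q1 * p1 * t)) q2,
        deriv (fun _t => (1 + b * q1) / (q1 * p1 * q2)) p2;
        deriv (fun t : ℂ => t) q1,
        deriv (fun _t => q1) p1,
        deriv (fun _t => q1) q2,
        deriv (fun _t => q1) p2]).det
      = (1 + b * q1) * (1 + b * q2) / (q1 * q2 * p1 * p2) ^ 2 := by
  simp only [deriv_const, deriv_id'']
  rw [det_fin_four_of_two_unit_rows, deriv_const_div_const_mul]
  simp only [mul_right_comm q1 _ q2]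
  rw [deriv_const_div_const_mul, div_mul_div_comm]
  ring

theorem jacobian_det_of_phi (b : ℂ) (hb : b ≠ 0) (q1 p1 q2 p2 : ℂ)
    (h : q1 * p1 * q2 * p2 ≠ 0) :
    (!![deriv (fun t => (1 + b * q2) / (t * q2 * p2)) q1,
        deriv (fun _t => (1 + b * q2) / (q1 * q2 * p2)) p1,
        deriv (fun t => (1 + b * t) / (q1 * t * p2)) q2,
        deriv (fun t => (1 + b * q2) / (q1 * q2 * t)) p2;
        deriv (fun _t => q2) q1,
        deriv (fun _t => q2) p1,
        deriv (fun t : ℂ => t) q2,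
        deriv (fun _t => q2) p2;
        deriv (fun t => (1 + b * t) / (t * p1 * q2)) q1,
        deriv (fun t => (1 + b * q1) / (q1 * t * q2)) p1,
        deriv (fun t => (1 + b * q1) / (q1 * p1 * t)) q2,
        deriv (fun _t => (1 + b * q1) / (q1 * p1 * q2)) p2;
        deriv (fun t : ℂ => t) q1,
        deriv (fun _t => q1) p1,
        deriv (fun _t => q1) q2,
        deriv (fun _t => q1) p2]).det
      = (1 + b * q1) * (1 + b * q2) / (q1 * q2 * p1 * p2) ^ 2 :=
  jacobian_det_of_phi_general b q1 p1 q2 p2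
end

section
/- Define ψ : ℂ⁴ ⇢ ℂ⁴ by ψ(Q₁,P₁,Q₂,P₂) = (P₂, (1+b·P₂)/(Q₂P₁P₂), P₁, (1+b·P₁)/(Q₁P₁P₂)). Then for every point x = (q₁,p₁,q₂,p₂) with q₁p₁q₂p₂ ≠ 0, 1+b·q₁ ≠ 0 and 1+b·q₂ ≠ 0 one has ψ(φ(x)) = x, and for every point X = (Q₁,P₁,Q₂,P₂) with Q₁P₁Q₂P₂ ≠ 0, 1+b·P₁ ≠ 0 and 1+b·P₂ ≠ 0 one has φ(ψ(X)) = X; in particular φ is a birational map. -/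
/-- The map φ(q₁,p₁,q₂,p₂) = ((1+b·q₂)/(q₁q₂p₂), q₂, (1+b·q₁)/(q₁p₁q₂), q₁). -/
noncomputable def phi (b : ℂ) : ℂ × ℂ × ℂ × ℂ → ℂ × ℂ × ℂ × ℂ :=
  fun x => ((1 + b * x.2.2.1) / (x.1 * x.2.2.1 * x.2.2.2), x.2.2.1,
            (1 + b * x.1) / (x.1 * x.2.1 * x.2.2.1), x.1)

/-- The map ψ(Q₁,P₁,Q₂,P₂) = (P₂, (1+b·P₂)/(Q₂P₁P₂), P₁, (1+b·P₁)/(Q₁P₁P₂)). -/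
noncomputable def psi (b : ℂ) : ℂ × ℂ × ℂ × ℂ → ℂ × ℂ × ℂ × ℂ :=
  fun X => (X.2.2.2, (1 + b * X.2.2.2) / (X.2.2.1 * X.2.1 * X.2.2.2), X.2.1,
            (1 + b * X.2.1) / (X.1 * X.2.1 * X.2.2.2))

/- STATEMENT 1: ψ is a (two-sided) inverse of φ on the indicated open dense sets;
in particular φ is a birational map. -/
theorem psi_is_inverse_of_phi (b : ℂ) (hb : b ≠ 0) :
    (∀ q1 p1 q2 p2 : ℂ, q1 * p1 * q2 * p2 ≠ 0 → 1 + b * q1 ≠ 0 → 1 + b * q2 ≠ 0 →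
      psi b (phi b (q1, p1, q2, p2)) = (q1, p1, q2, p2)) ∧
    (∀ Q1 P1 Q2 P2 : ℂ, Q1 * P1 * Q2 * P2 ≠ 0 → 1 + b * P1 ≠ 0 → 1 + b * P2 ≠ 0 →
      phi b (psi b (Q1, P1, Q2, P2)) = (Q1, P1, Q2, P2)) := by
  constructor
  · intro q1 p1 q2 p2 h h1 h2
    have hq1 : q1 ≠ 0 := by intro h'; apply h; rw [h']; ring
    have hp1 : p1 ≠ 0 := by intro h'; apply h; rw [h']; ring
    have hq2 : q2 ≠ 0 := by intro h'; apply h; rw [h']; ring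
    have hp2 : p2 ≠ 0 := by intro h'; apply h; rw [h']; ring
    simp only [phi, psi, Prod.mk.injEq]
    refine ⟨trivial, ?_, trivial, ?_⟩ <;> field_simp <;> ring
  · intro Q1 P1 Q2 P2 h h1 h2
    have hQ1 : Q1 ≠ 0 := by intro h'; apply h; rw [h']; ring
    have hP1 : P1 ≠ 0 := by intro h'; apply h; rw [h']; ring
    have hQ2 : Q2 ≠ 0 := by intro h'; apply h; rw [h']; ring
    have hP2 : P2 ≠ 0 := by intro h'; apply h; rw [h']; ring
    simp only [phi, psi, Prod.mk.injEq]
    refine ⟨?_, trivial, ?_, trivial⟩ <;> field_simp <;> ring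
end

section
/- Let s : ℂ⁴ → ℂ⁴ be the swap s(q₁,p₁,q₂,p₂) = (q₂,p₂,q₁,p₁). Then φ commutes with s: for every point x = (q₁,p₁,q₂,p₂) with q₁p₁q₂p₂ ≠ 0, φ(s(x)) = s(φ(x)). -/
/-- The swap s(q₁,p₁,q₂,p₂) = (q₂,p₂,q₁,p₁). -/
def swapComponents : ℂ × ℂ × ℂ × ℂ → ℂ × ℂ × ℂ × ℂ :=
  fun x => (x.2.2.1, x.2.2.2, x.1, x.2.1)

/- STATEMENT 2: φ commutes with the swap s. -/
theorem phi_commutes_with_swap (b : ℂ) (hb : b ≠ 0) (q1 p1 q2 p2 : ℂ)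
    (h : q1 * p1 * q2 * p2 ≠ 0) :
    phi b (swapComponents (q1, p1, q2, p2)) = swapComponents (phi b (q1, p1, q2, p2)) := by
  simp only [phi, swapComponents, Prod.mk.injEq]
  refine ⟨by ring_nf, trivial, by ring_nf, trivial⟩
end

section
/- For each j ∈ {0,1,2} and every point x = (q₁,p₁,q₂,p₂) ∈ ℂ⁴ with q₁p₁q₂p₂ ≠ 0, the polynomial Iⱼ transforms under φ by the common factor given by the Jacobian determinant: Iⱼ(φ(x)) = ((1+b·q₁)(1+b·q₂)/(q₁q₂p₁p₂)²) · Iⱼ(x). -/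
/-- I₀ = q₁p₁q₂p₂. -/
def I0 : ℂ × ℂ × ℂ × ℂ → ℂ
  | (q1, p1, q2, p2) => q1 * p1 * q2 * p2

/-- I₁ = q₁p₁ + q₂p₂ + b(q₁p₁p₂ + p₁q₂p₂ + q₁p₁q₂ + q₁q₂p₂) + q₁²p₁q₂p₂² + q₁p₁²q₂²p₂. -/
def I1 (b : ℂ) : ℂ × ℂ × ℂ × ℂ → ℂ
  | (q1, p1, q2, p2) =>
      q1 * p1 + q2 * p2
        + b * (q1 * p1 * p2 + p1 * q2 * p2 + q1 * p1 * q2 + q1 * q2 * p2)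
        + q1 ^ 2 * p1 * q2 * p2 ^ 2 + q1 * p1 ^ 2 * q2 ^ 2 * p2

/-- I₂ = 1 + q₁²p₁²q₂²p₂² + b(1+q₁p₁q₂p₂)(q₁+p₁+q₂+p₂) + b²(q₁q₂+q₁p₂+p₁q₂+p₁p₂). -/
def I2 (b : ℂ) : ℂ × ℂ × ℂ × ℂ → ℂ
  | (q1, p1, q2, p2) =>
      1 + q1 ^ 2 * p1 ^ 2 * q2 ^ 2 * p2 ^ 2
        + b * (1 + q1 * p1 * q2 * p2) * (q1 + p1 + q2 + p2)
        + b ^ 2 * (q1 * q2 + q1 * p2 + p1 * q2 + p1 * p2)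

/- STATEMENT 3: each Iⱼ transforms under φ by the common factor
(1+b·q₁)(1+b·q₂)/(q₁q₂p₁p₂)². -/
set_option maxHeartbeats 2000000 in
theorem I_transforms_by_jacobian_factor (b : ℂ) (hb : b ≠ 0) (q1 p1 q2 p2 : ℂ)
    (h : q1 * p1 * q2 * p2 ≠ 0) :
    I0 (phi b (q1, p1, q2, p2))
        = (1 + b * q1) * (1 + b * q2) / (q1 * q2 * p1 * p2) ^ 2 * I0 (q1, p1, q2, p2) ∧
    I1 b (phi b (q1, p1, q2, p2))
        = (1 + b * q1) * (1 + b * q2) / (q1 * q2 * p1 * p2) ^ 2 * I1 b (q1, p1, q2, p2) ∧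
    I2 b (phi b (q1, p1, q2, p2))
        = (1 + b * q1) * (1 + b * q2) / (q1 * q2 * p1 * p2) ^ 2 * I2 b (q1, p1, q2, p2) := by
  obtain ⟨hq1, hp1, hq2, hp2⟩ : q1 ≠ 0 ∧ p1 ≠ 0 ∧ q2 ≠ 0 ∧ p2 ≠ 0 := by
    simp only [mul_ne_zero_iff] at h; tauto
  have hd1 : q1 * q2 * p2 ≠ 0 := by simp [hq1, hq2, hp2]
  have hd2 : q1 * p1 * q2 ≠ 0 := by simp [hq1, hp1, hq2]
  have hD : (q1 * q2 * p1 * p2) ^ 2 ≠ 0 := by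
    apply pow_ne_zero; simp [hq1, hq2, hp1, hp2]
  set A := (1 + b * q2) / (q1 * q2 * p2) with hA
  set B := (1 + b * q1) / (q1 * p1 * q2) with hB
  have hA' : A * (q1 * q2 * p2) = 1 + b * q2 := div_mul_cancel₀ _ hd1
  have hB' : B * (q1 * p1 * q2) = 1 + b * q1 := div_mul_cancel₀ _ hd2
  refine ⟨?_, ?_, ?_⟩
  · show I0 (A, q2, B, q1) = _
    simp only [I0]
    conv_rhs => rw [div_mul_eq_mul_div]
    rw [eq_div_iff hD]
    linear_combination (q1 ^ 2 * p1 ^ 2 * q2 ^ 2 * p2 * B) * hA' + (q1 * p1 * q2 * p2 + b * q1 * p1 * q2 ^ 2 * p2) * hB'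
  · show I1 b (A, q2, B, q1) = _
    simp only [I1]
    conv_rhs => rw [div_mul_eq_mul_div]
    rw [eq_div_iff hD]
    linear_combination (q1 * p1 ^ 2 * q2 ^ 2 * p2 + q1 ^ 2 * p1 ^ 2 * q2 * B + q1 ^ 2 * p1 ^ 2 * q2 ^ 3 * p2 * B ^ 2 + q1 ^ 3 * p1 ^ 2 * q2 ^ 2 * p2 * A * B + b * q1 * p1 ^ 2 * q2 ^ 2 * p2 * B + b * q1 ^ 2 * p1 ^ 2 * q2 * p2 * B + b * q1 ^ 2 * p1 ^ 2 * q2 ^ 2 * B + b * q1 ^ 2 * p1 ^ 2 * q2 ^ 2 * p2) * hA' + (q2 * p2 + q1 * p1 + q1 * p1 * q2 ^ 2 * p2 * B + q1 ^ 2 * p1 * q2 * p2 ^ 2 + b * q2 ^ 2 * p2 + b * p1 * q2 * p2 + b * q1 * q2 * p2 + b * q1 * p1 * p2 + 2 * b * q1 * p1 * q2 + b * q1 * p1 * q2 ^ 3 * p2 * B + b * q1 ^ 2 * p1 * q2 ^ 2 * p2 ^ 2 + b ^ 2 * p1 * q2 ^ 2 * p2 + b ^ 2 * q1 * q2 ^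 2 * p2 + b ^ 2 * q1 * p1 * q2 * p2 + b ^ 2 * q1 * p1 * q2 ^ 2) * hB'
  · show I2 b (A, q2, B, q1) = _
    simp only [I2]
    conv_rhs => rw [div_mul_eq_mul_div]
    rw [eq_div_iff hD]
    linear_combination (q1 ^ 2 * p1 ^ 2 * q2 ^ 2 * B ^ 2 + q1 ^ 3 * p1 ^ 2 * q2 ^ 3 * p2 * A * B ^ 2 + b * q1 * p1 ^ 2 * q2 * B + b * q1 * p1 ^ 2 * q2 * p2 + b * q1 ^ 2 * p1 ^ 2 * q2 ^ 2 * p2 * B ^ 2 + b * q1 ^ 2 * p1 ^ 2 * q2 ^ 2 * p2 * A * B + b * q1 ^ 2 * p1 ^ 2 * q2 ^ 3 * B ^ 2 + b * q1 ^ 2 * p1 ^ 2 * q2 ^ 3 * p2 * B + b * q1 ^ 3 * p1 ^ 2 * q2 ^ 2 * p2 * B + b ^ 2 * q1 * p1 ^ 2 * q2 * p2 * B + b ^ 2 * q1 * p1 ^ 2 * q2 ^ 2 * B + b ^ 2 * q1 ^ 2 * p1 ^ 2 * q2 * p2) * hA' + (1 + q1 * p1 * q2 * B + b * p2 + 2 *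 b * q2 + b * p1 + b * q1 + b * q1 * p1 * q2 * p2 * B + b * q1 * p1 * q2 * p2 ^ 2 + 2 * b * q1 * p1 * q2 ^ 2 * B + b * q1 * p1 * q2 ^ 2 * p2 + b * q1 ^ 2 * p1 * q2 * p2 + b ^ 2 * q2 * p2 + b ^ 2 * q2 ^ 2 + b ^ 2 * p1 * p2 + 2 * b ^ 2 * p1 * q2 + b ^ 2 * q1 * p2 + 2 * b ^ 2 * q1 * q2 + b ^ 2 * q1 * p1 * q2 ^ 2 * p2 * B + b ^ 2 * q1 * p1 * q2 ^ 2 * p2 ^ 2 + b ^ 2 * q1 * p1 * q2 ^ 3 * B + b ^ 2 * q1 * p1 * q2 ^ 3 * p2 + b ^ 2 * q1 ^ 2 * p1 * q2 ^ 2 * p2 + b ^ 3 * p1 * q2 * p2 + b ^ 3 * p1 * q2 ^ 2 + b ^ 3 * q1 * q2 * p2 + b ^ 3 * q1 * q2 ^ 2) * hB'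
end

section
/- The rational function H₁ = I₁/I₀ is a conserved quantity of φ: for every point x = (q₁,p₁,q₂,p₂) ∈ ℂ⁴ with q₁p₁q₂p₂ ≠ 0, 1+b·q₁ ≠ 0 and 1+b·q₂ ≠ 0, one has I₁(φ(x))/I₀(φ(x)) = I₁(x)/I₀(x). -/
set_option maxHeartbeats 4000000 in
/- STATEMENT 4: H₁ = I₁/I₀ is a conserved quantity of φ. -/
theorem H1_conserved (b : ℂ) (hb : b ≠ 0) (q1 p1 q2 p2 : ℂ)
    (h : q1 * p1 * q2 * p2 ≠ 0) (h1 : 1 + b * q1 ≠ 0) (h2 : 1 + b * q2 ≠ 0) :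
    I1 b (phi b (q1, p1, q2, p2)) / I0 (phi b (q1, p1, q2, p2))
      = I1 b (q1, p1, q2, p2) / I0 (q1, p1, q2, p2) := by
  have hq1 : q1 ≠ 0 := fun e => h (by simp [e])
  have hp1 : p1 ≠ 0 := fun e => h (by simp [e])
  have hq2 : q2 ≠ 0 := fun e => h (by simp [e])
  have hp2 : p2 ≠ 0 := fun e => h (by simp [e])
  have hD : q1 * q2 * p2 ≠ 0 := by simp [hq1, hq2, hp2]
  have hE : q1 * p1 * q2 ≠ 0 := by simp [hq1, hp1, hq2]
  simp only [phi, I1, I0]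
  set a := (1 + b * q2) / (q1 * q2 * p2) with ha_def
  set c := (1 + b * q1) / (q1 * p1 * q2) with hc_def
  have ha : a * (q1 * q2 * p2) = 1 + b * q2 := div_mul_cancel₀ _ hD
  have hc : c * (q1 * p1 * q2) = 1 + b * q1 := div_mul_cancel₀ _ hE
  have haz : a ≠ 0 := div_ne_zero h2 hD
  have hcz : c ≠ 0 := div_ne_zero h1 hE
  rw [div_eq_div_iff (mul_ne_zero (mul_ne_zero (mul_ne_zero haz hq2) hcz) hq1) h]
  have hM : ((q1 * q2 * p2) ^ 2 * (q1 * p1 * q2) ^ 2) ≠ 0 :=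
    mul_ne_zero (pow_ne_zero 2 hD) (pow_ne_zero 2 hE)
  apply mul_right_cancel₀ hM
  linear_combination ((-1)*q1^4*p1^2*q2^5*p2^2*c + q1^4*p1^3*q2^5*p2^2 + q1^5*p1^3*q2^6*p2^2*c^2 + (-1)*q1^5*p1^4*q2^6*p2^2*c + q1^6*p1^3*q2^5*p2^2*a*c + (-1)*q1^6*p1^3*q2^5*p2^3*c + (-1)*b*q1^5*p1^2*q2^5*p2^2*c + b*q1^5*p1^3*q2^5*p2^2) * ha + (q1^4*p1^2*q2^5*p2^2*c + (-1)*q1^4*p1^3*q2^5*p2^2 + b*q1^4*p1^2*q2^6*p2^2*c + (-1)*b*q1^4*p1^3*q2^6*p2^2) * hc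
end

section
/- The rational function H₂ = I₂/I₀ is a conserved quantity of φ: for every point x = (q₁,p₁,q₂,p₂) ∈ ℂ⁴ with q₁p₁q₂p₂ ≠ 0, 1+b·q₁ ≠ 0 and 1+b·q₂ ≠ 0, one has I₂(φ(x))/I₀(φ(x)) = I₂(x)/I₀(x). -/
/- STATEMENT 5: H₂ = I₂/I₀ is a conserved quantity of φ. -/
set_option maxHeartbeats 1000000 in
theorem H2_conserved (b : ℂ) (hb : b ≠ 0) (q1 p1 q2 p2 : ℂ)
    (h : q1 * p1 * q2 * p2 ≠ 0) (h1 : 1 + b * q1 ≠ 0) (h2 : 1 + b * q2 ≠ 0) :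
    I2 b (phi b (q1, p1, q2, p2)) / I0 (phi b (q1, p1, q2, p2))
      = I2 b (q1, p1, q2, p2) / I0 (q1, p1, q2, p2) := by
  have hq1 : q1 ≠ 0 := by intro hx; apply h; simp [hx]
  have hp1 : p1 ≠ 0 := by intro hx; apply h; simp [hx]
  have hq2 : q2 ≠ 0 := by intro hx; apply h; simp [hx]
  have hp2 : p2 ≠ 0 := by intro hx; apply h; simp [hx]
  have hA : I0 (phi b (q1, p1, q2, p2))
      = (1 + b * q1) * (1 + b * q2) / (q1 * p1 * q2 * p2) := by
    simp only [phi, I0]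
    field_simp
  have hB : I2 b (phi b (q1, p1, q2, p2))
      = I2 b (q1, p1, q2, p2) * ((1 + b * q1) * (1 + b * q2)) / (q1 * p1 * q2 * p2) ^ 2 := by
    simp only [phi, I2]
    rw [eq_div_iff (pow_ne_zero 2 h)]
    set u := (1 + b * q2) / (q1 * q2 * p2) with hu_def
    set v := (1 + b * q1) / (q1 * p1 * q2) with hv_def
    have hu : u * (q1 * q2 * p2) = 1 + b * q2 := by
      rw [hu_def, div_mul_cancel₀]
      simp [hq1, hq2, hp2]
    have hv : v * (q1 * p1 * q2) = 1 + b * q1 := by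
      rw [hv_def, div_mul_cancel₀]
      simp [hq1, hq2, hp1]
    linear_combination (b*q1*p1^2*q2*p2 + b^2*q1^2*p1^2*q2*p2 + v*b*q1*p1^2*q2 + v*b*q1^2*p1^2*q2^3*p2 + v*b*q1^3*p1^2*q2^2*p2 + v*b^2*q1*p1^2*q2*p2 + v*b^2*q1*p1^2*q2^2 + v^2*q1^2*p1^2*q2^2 + v^2*b*q1^2*p1^2*q2^2*p2 + v^2*b*q1^2*p1^2*q2^3 + u*v*b*q1^2*p1^2*q2^2*p2 + u*v^2*q1^3*p1^2*q2^3*p2) * hu + (1 + b*p2 + 2*b*q2 + b*p1 + b*q1 + b*q1*p1*q2*p2^2 + b*q1*p1*q2^2*p2 + b*q1^2*p1*q2*p2 + b^2*q2*p2 + b^2*q2^2 + b^2*p1*p2 + 2*b^2*p1*q2 + b^2*q1*p2 + 2*b^2*q1*q2 + b^2*q1*p1*q2^2*p2^2 + b^2*q1*p1*q2^3*p2 + b^2*q1^2*p1*q2^2*p2 + b^3*p1*q2*p2 + b^3*p1*q2^2 + b^3*q1*q2*p2 + b^3*q1*q2^2 + v*q1*p1*q2 + v*b*q1*p1*q2*p2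 + 2*v*b*q1*p1*q2^2 + v*b^2*q1*p1*q2^2*p2 + v*b^2*q1*p1*q2^3) * hv
  rw [hA, hB, I0]
  have hAB : (1 + b * q1) * (1 + b * q2) ≠ 0 := mul_ne_zero h1 h2
  field_simp
end

section
/- The two conserved quantities H₁ = I₁/I₀ and H₂ = I₂/I₀ are in involution with respect to the log-canonical Poisson bracket: {H₁, H₂}(x) = 0 at every point x = (q₁,p₁,q₂,p₂) ∈ ℂ⁴ with q₁p₁q₂p₂ ≠ 0. -/
/-- Partial derivative with respect to the first coordinate q₁. -/
noncomputable def pdq1 (f : ℂ × ℂ × ℂ × ℂ → ℂ) (x : ℂ × ℂ × ℂ × ℂ) : ℂ :=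
  deriv (fun t => f (t, x.2.1, x.2.2.1, x.2.2.2)) x.1

/-- Partial derivative with respect to the second coordinate p₁. -/
noncomputable def pdp1 (f : ℂ × ℂ × ℂ × ℂ → ℂ) (x : ℂ × ℂ × ℂ × ℂ) : ℂ :=
  deriv (fun t => f (x.1, t, x.2.2.1, x.2.2.2)) x.2.1

/-- Partial derivative with respect to the third coordinate q₂. -/
noncomputable def pdq2 (f : ℂ × ℂ × ℂ × ℂ → ℂ) (x : ℂ × ℂ × ℂ × ℂ) : ℂ :=
  deriv (fun t => f (x.1, x.2.1, t, x.2.2.2)) x.2.2.1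

/-- Partial derivative with respect to the fourth coordinate p₂. -/
noncomputable def pdp2 (f : ℂ × ℂ × ℂ × ℂ → ℂ) (x : ℂ × ℂ × ℂ × ℂ) : ℂ :=
  deriv (fun t => f (x.1, x.2.1, x.2.2.1, t)) x.2.2.2

/-- The log-canonical Poisson bracket
{f,g} = q₁p₁(∂f/∂p₁·∂g/∂q₁ − ∂f/∂q₁·∂g/∂p₁) + q₂p₂(∂f/∂p₂·∂g/∂q₂ − ∂f/∂q₂·∂g/∂p₂). -/
noncomputable def pbracket (f g : ℂ × ℂ × ℂ × ℂ → ℂ) (x : ℂ × ℂ × ℂ × ℂ) : ℂ :=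
  x.1 * x.2.1 * (pdp1 f x * pdq1 g x - pdq1 f x * pdp1 g x)
    + x.2.2.1 * x.2.2.2 * (pdp2 f x * pdq2 g x - pdq2 f x * pdp2 g x)

/-! On the torus `q₁p₁q₂p₂ ≠ 0` both Hamiltonians are Laurent polynomials of degree at most one in
each variable, so each Euler derivative `t ∂ₜ H` is read off from the coefficients of `t` and `t⁻¹`.
The log-canonical bracket is a bilinear expression in these Euler derivatives, and substituting
them makes it vanish identically. -/

noncomputable def H1 (b : ℂ) (y : ℂ × ℂ × ℂ × ℂ) : ℂ := I1 b y / I0 y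

noncomputable def H2 (b : ℂ) (y : ℂ × ℂ × ℂ × ℂ) : ℂ := I2 b y / I0 y

lemma hasDerivAt_div_add_add_mul (a c d : ℂ) {t : ℂ} (ht : t ≠ 0) :
    HasDerivAt (fun s => a / s + c + d * s) (d - a / t ^ 2) t := by
  have h := (((hasDerivAt_inv ht).const_mul a).add_const c).fun_add ((hasDerivAt_id' t).const_mul d)
  simp only [← div_eq_mul_inv] at h
  exact h.congr_deriv (by ring)

lemma mul_deriv_eq_of_eq_div_add_add_mul {f : ℂ → ℂ} {t : ℂ} (a c d : ℂ) (ht : t ≠ 0)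
    (hf : ∀ s ≠ 0, f s = a / s + c + d * s) : t * deriv f t = d * t - a / t := by
  have hfe : f =ᶠ[nhds t] fun s => a / s + c + d * s := by
    filter_upwards [eventually_ne_nhds ht] using hf
  rw [hfe.deriv_eq, (hasDerivAt_div_add_add_mul a c d ht).deriv]
  field_simp

lemma pbracket_eq_euler (f g : ℂ × ℂ × ℂ × ℂ → ℂ) (q1 p1 q2 p2 : ℂ) :
    pbracket f g (q1, p1, q2, p2) =
      p1 * pdp1 f (q1, p1, q2, p2) * (q1 * pdq1 g (q1, p1, q2, p2))
        - q1 * pdq1 f (q1, p1, q2, p2) * (p1 * pdp1 g (q1, p1, q2, p2))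
      + p2 * pdp2 f (q1, p1, q2, p2) * (q2 * pdq2 g (q1, p1, q2, p2))
        - q2 * pdq2 f (q1, p1, q2, p2) * (p2 * pdp2 g (q1, p1, q2, p2)) := by
  simp only [pbracket]
  ring

section Torus

variable {b q1 p1 q2 p2 : ℂ}

lemma H1_eq_laurent (hq1 : q1 ≠ 0) (hp1 : p1 ≠ 0) (hq2 : q2 ≠ 0) (hp2 : p2 ≠ 0) :
    H1 b (q1, p1, q2, p2) = 1 / (q1 * p1) + 1 / (q2 * p2)
      + b * (1 / q1 + 1 / p1 + 1 / q2 + 1 / p2) + q1 * p2 + p1 * q2 := by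
  simp only [H1, I1, I0]
  field_simp
  ring

lemma H2_eq_laurent (hq1 : q1 ≠ 0) (hp1 : p1 ≠ 0) (hq2 : q2 ≠ 0) (hp2 : p2 ≠ 0) :
    H2 b (q1, p1, q2, p2) = 1 / (q1 * p1 * q2 * p2) + q1 * p1 * q2 * p2
      + b * (1 / (q1 * p1 * q2 * p2) + 1) * (q1 + p1 + q2 + p2)
      + b ^ 2 * (1 / q1 + 1 / p1) * (1 / q2 + 1 / p2) := by
  simp only [H2, I2, I0]
  field_simp
  ring

lemma q1_mul_pdq1_H1 (hq1 : q1 ≠ 0) (hp1 : p1 ≠ 0) (hq2 : q2 ≠ 0) (hp2 : p2 ≠ 0) :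
    q1 * pdq1 (H1 b) (q1, p1, q2, p2) = p2 * q1 - (1 / p1 + b) / q1 :=
  mul_deriv_eq_of_eq_div_add_add_mul _ (1 / (q2 * p2) + b * (1 / p1 + 1 / q2 + 1 / p2) + p1 * q2)
    _ hq1 fun s hs => by rw [H1_eq_laurent hs hp1 hq2 hp2]; ring

lemma p1_mul_pdp1_H1 (hq1 : q1 ≠ 0) (hp1 : p1 ≠ 0) (hq2 : q2 ≠ 0) (hp2 : p2 ≠ 0) :
    p1 * pdp1 (H1 b) (q1, p1, q2, p2) = q2 * p1 - (1 / q1 + b) / p1 :=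
  mul_deriv_eq_of_eq_div_add_add_mul _ (1 / (q2 * p2) + b * (1 / q1 + 1 / q2 + 1 / p2) + q1 * p2)
    _ hp1 fun s hs => by rw [H1_eq_laurent hq1 hs hq2 hp2]; ring

lemma q2_mul_pdq2_H1 (hq1 : q1 ≠ 0) (hp1 : p1 ≠ 0) (hq2 : q2 ≠ 0) (hp2 : p2 ≠ 0) :
    q2 * pdq2 (H1 b) (q1, p1, q2, p2) = p1 * q2 - (1 / p2 + b) / q2 :=
  mul_deriv_eq_of_eq_div_add_add_mul _ (1 / (q1 * p1) + b * (1 / q1 + 1 / p1 + 1 / p2) + q1 * p2)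
    _ hq2 fun s hs => by rw [H1_eq_laurent hq1 hp1 hs hp2]; ring

lemma p2_mul_pdp2_H1 (hq1 : q1 ≠ 0) (hp1 : p1 ≠ 0) (hq2 : q2 ≠ 0) (hp2 : p2 ≠ 0) :
    p2 * pdp2 (H1 b) (q1, p1, q2, p2) = q1 * p2 - (1 / q2 + b) / p2 :=
  mul_deriv_eq_of_eq_div_add_add_mul _ (1 / (q1 * p1) + b * (1 / q1 + 1 / p1 + 1 / q2) + p1 * q2)
    _ hp2 fun s hs => by rw [H1_eq_laurent hq1 hp1 hq2 hs]; ring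

lemma q1_mul_pdq1_H2 (hq1 : q1 ≠ 0) (hp1 : p1 ≠ 0) (hq2 : q2 ≠ 0) (hp2 : p2 ≠ 0) :
    q1 * pdq1 (H2 b) (q1, p1, q2, p2) = (p1 * q2 * p2 + b) * q1
      - ((1 + b * (p1 + q2 + p2)) / (p1 * q2 * p2) + b ^ 2 * (1 / q2 + 1 / p2)) / q1 :=
  mul_deriv_eq_of_eq_div_add_add_mul _
    (b / (p1 * q2 * p2) + b * (p1 + q2 + p2) + b ^ 2 * (1 / q2 + 1 / p2) / p1)
    _ hq1 fun s hs => by rw [H2_eq_laurent hs hp1 hq2 hp2]; field_simp; ring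

lemma p1_mul_pdp1_H2 (hq1 : q1 ≠ 0) (hp1 : p1 ≠ 0) (hq2 : q2 ≠ 0) (hp2 : p2 ≠ 0) :
    p1 * pdp1 (H2 b) (q1, p1, q2, p2) = (q1 * q2 * p2 + b) * p1
      - ((1 + b * (q1 + q2 + p2)) / (q1 * q2 * p2) + b ^ 2 * (1 / q2 + 1 / p2)) / p1 :=
  mul_deriv_eq_of_eq_div_add_add_mul _
    (b / (q1 * q2 * p2) + b * (q1 + q2 + p2) + b ^ 2 * (1 / q2 + 1 / p2) / q1)
    _ hp1 fun s hs => by rw [H2_eq_laurent hq1 hs hq2 hp2]; field_simp; ring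

lemma q2_mul_pdq2_H2 (hq1 : q1 ≠ 0) (hp1 : p1 ≠ 0) (hq2 : q2 ≠ 0) (hp2 : p2 ≠ 0) :
    q2 * pdq2 (H2 b) (q1, p1, q2, p2) = (q1 * p1 * p2 + b) * q2
      - ((1 + b * (q1 + p1 + p2)) / (q1 * p1 * p2) + b ^ 2 * (1 / q1 + 1 / p1)) / q2 :=
  mul_deriv_eq_of_eq_div_add_add_mul _
    (b / (q1 * p1 * p2) + b * (q1 + p1 + p2) + b ^ 2 * (1 / q1 + 1 / p1) / p2)
    _ hq2 fun s hs => by rw [H2_eq_laurent hq1 hp1 hs hp2]; field_simp; ring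

lemma p2_mul_pdp2_H2 (hq1 : q1 ≠ 0) (hp1 : p1 ≠ 0) (hq2 : q2 ≠ 0) (hp2 : p2 ≠ 0) :
    p2 * pdp2 (H2 b) (q1, p1, q2, p2) = (q1 * p1 * q2 + b) * p2
      - ((1 + b * (q1 + p1 + q2)) / (q1 * p1 * q2) + b ^ 2 * (1 / q1 + 1 / p1)) / p2 :=
  mul_deriv_eq_of_eq_div_add_add_mul _
    (b / (q1 * p1 * q2) + b * (q1 + p1 + q2) + b ^ 2 * (1 / q1 + 1 / p1) / q2)
    _ hp2 fun s hs => by rw [H2_eq_laurent hq1 hp1 hq2 hs]; field_simp; ring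

end Torus

theorem H1_H2_in_involution_general (b : ℂ) (x : ℂ × ℂ × ℂ × ℂ)
    (h : x.1 * x.2.1 * x.2.2.1 * x.2.2.2 ≠ 0) :
    pbracket (fun y => I1 b y / I0 y) (fun y => I2 b y / I0 y) x = 0 := by
  obtain ⟨q1, p1, q2, p2⟩ := x
  obtain ⟨⟨⟨hq1, hp1⟩, hq2⟩, hp2⟩ : ((q1 ≠ 0 ∧ p1 ≠ 0) ∧ q2 ≠ 0) ∧ p2 ≠ 0 := by
    simpa only [ne_eq, mul_eq_zero, not_or] using h
  change pbracket (H1 b) (H2 b) _ = 0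
  rw [pbracket_eq_euler, q1_mul_pdq1_H1 hq1 hp1 hq2 hp2, p1_mul_pdp1_H1 hq1 hp1 hq2 hp2,
    q2_mul_pdq2_H1 hq1 hp1 hq2 hp2, p2_mul_pdp2_H1 hq1 hp1 hq2 hp2,
    q1_mul_pdq1_H2 hq1 hp1 hq2 hp2, p1_mul_pdp1_H2 hq1 hp1 hq2 hp2,
    q2_mul_pdq2_H2 hq1 hp1 hq2 hp2, p2_mul_pdp2_H2 hq1 hp1 hq2 hp2]
  field_simp
  ring

theorem H1_H2_in_involution (b : ℂ) (hb : b ≠ 0) (x : ℂ × ℂ × ℂ × ℂ)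
    (h : x.1 * x.2.1 * x.2.2.1 * x.2.2.2 ≠ 0) :
    pbracket (fun y => I1 b y / I0 y) (fun y => I2 b y / I0 y) x = 0 :=
  H1_H2_in_involution_general b x h
end

section
/- The map φ preserves the log-canonical Poisson structure: writing φ = (φ₁,φ₂,φ₃,φ₄), at every point x = (q₁,p₁,q₂,p₂) ∈ ℂ⁴ with q₁p₁q₂p₂ ≠ 0 one has {φ₁,φ₂}(x) = −φ₁(x)·φ₂(x), {φ₃,φ₄}(x) = −φ₃(x)·φ₄(x), and {φ₁,φ₃}(x) = {φ₁,φ₄}(x) = {φ₂,φ₃}(x) = {φ₂,φ₄}(x) = 0; that is, the components of φ satisfy the same bracket relations as the coordinate functions (for which {q₁,p₁} = −q₁p₁, {q₂,p₂} = −q₂p₂, and all other coordinate brackets vanish), so φ preserves the symplectic form ω = dq₁∧dp₁/(q₁p₁) + dq₂∧dp₂/(q₂p₂). -/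
/-- First component of φ. -/
noncomputable def phi1 (b : ℂ) (x : ℂ × ℂ × ℂ × ℂ) : ℂ :=
  (1 + b * x.2.2.1) / (x.1 * x.2.2.1 * x.2.2.2)

/-- Second component of φ. -/
def phi2 (x : ℂ × ℂ × ℂ × ℂ) : ℂ := x.2.2.1

/-- Third component of φ. -/
noncomputable def phi3 (b : ℂ) (x : ℂ × ℂ × ℂ × ℂ) : ℂ :=
  (1 + b * x.1) / (x.1 * x.2.1 * x.2.2.1)

/-- Fourth component of φ. -/
def phi4 (x : ℂ × ℂ × ℂ × ℂ) : ℂ := x.1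

/-
In each single variable, every component of φ is constant, the variable itself, or of the form
(a + c t)/(k t), whose derivative −a/(k t²) does not depend on c. Substituting these partial
derivatives turns each of the six bracket relations into an identity of rational functions.
-/

theorem deriv_affine_div_const_mul_self (a c k t : ℂ) (hk : k ≠ 0) (ht : t ≠ 0) :
    deriv (fun s => (a + c * s) / (k * s)) t = -a / (k * t ^ 2) := by
  have hderiv : HasDerivAt (fun s => (a + c * s) / (k * s))
      ((c * (k * t) - (a + c * t) * k) / (k * t) ^ 2) t := by
    simpa using (((hasDerivAt_id t).const_mul c).const_add a).fun_div
      ((hasDerivAt_id t).const_mul k) (mul_ne_zero hk ht)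
  rw [hderiv.deriv]
  field_simp
  ring

section Partials

variable {b q₁ p₁ q₂ p₂ : ℂ}

theorem pdq1_phi1 (hq₁ : q₁ ≠ 0) (hq₂ : q₂ ≠ 0) (hp₂ : p₂ ≠ 0) :
    pdq1 (phi1 b) (q₁, p₁, q₂, p₂) = -(1 + b * q₂) / (q₂ * p₂ * q₁ ^ 2) := by
  have hfun : (fun t => phi1 b (t, p₁, q₂, p₂))
      = fun t => ((1 + b * q₂) + 0 * t) / (q₂ * p₂ * t) := by
    funext t; simp only [phi1]; ring
  rw [pdq1, hfun]
  exact deriv_affine_div_const_mul_self _ _ _ _ (mul_ne_zero hq₂ hp₂) hq₁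

theorem pdq2_phi1 (hq₁ : q₁ ≠ 0) (hq₂ : q₂ ≠ 0) (hp₂ : p₂ ≠ 0) :
    pdq2 (phi1 b) (q₁, p₁, q₂, p₂) = -1 / (q₁ * p₂ * q₂ ^ 2) := by
  have hfun : (fun t => phi1 b (q₁, p₁, t, p₂)) = fun t => (1 + b * t) / (q₁ * p₂ * t) := by
    funext t; simp only [phi1]; ring
  rw [pdq2, hfun]
  exact deriv_affine_div_const_mul_self _ _ _ _ (mul_ne_zero hq₁ hp₂) hq₂

theorem pdp2_phi1 (hq₁ : q₁ ≠ 0) (hq₂ : q₂ ≠ 0) (hp₂ : p₂ ≠ 0) :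
    pdp2 (phi1 b) (q₁, p₁, q₂, p₂) = -(1 + b * q₂) / (q₁ * q₂ * p₂ ^ 2) := by
  have hfun : (fun t => phi1 b (q₁, p₁, q₂, t))
      = fun t => ((1 + b * q₂) + 0 * t) / (q₁ * q₂ * t) := by
    funext t; simp only [phi1]; ring
  rw [pdp2, hfun]
  exact deriv_affine_div_const_mul_self _ _ _ _ (mul_ne_zero hq₁ hq₂) hp₂

theorem pdq1_phi3 (hq₁ : q₁ ≠ 0) (hp₁ : p₁ ≠ 0) (hq₂ : q₂ ≠ 0) :
    pdq1 (phi3 b) (q₁, p₁, q₂, p₂) = -1 / (p₁ * q₂ * q₁ ^ 2) := by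
  have hfun : (fun t => phi3 b (t, p₁, q₂, p₂)) = fun t => (1 + b * t) / (p₁ * q₂ * t) := by
    funext t; simp only [phi3]; ring
  rw [pdq1, hfun]
  exact deriv_affine_div_const_mul_self _ _ _ _ (mul_ne_zero hp₁ hq₂) hq₁

theorem pdp1_phi3 (hq₁ : q₁ ≠ 0) (hp₁ : p₁ ≠ 0) (hq₂ : q₂ ≠ 0) :
    pdp1 (phi3 b) (q₁, p₁, q₂, p₂) = -(1 + b * q₁) / (q₁ * q₂ * p₁ ^ 2) := by
  have hfun : (fun t => phi3 b (q₁, t, q₂, p₂))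
      = fun t => ((1 + b * q₁) + 0 * t) / (q₁ * q₂ * t) := by
    funext t; simp only [phi3]; ring
  rw [pdp1, hfun]
  exact deriv_affine_div_const_mul_self _ _ _ _ (mul_ne_zero hq₁ hq₂) hp₁

theorem pdq2_phi3 (hq₁ : q₁ ≠ 0) (hp₁ : p₁ ≠ 0) (hq₂ : q₂ ≠ 0) :
    pdq2 (phi3 b) (q₁, p₁, q₂, p₂) = -(1 + b * q₁) / (q₁ * p₁ * q₂ ^ 2) := by
  have hfun : (fun t => phi3 b (q₁, p₁, t, p₂))
      = fun t => ((1 + b * q₁) + 0 * t) / (q₁ * p₁ * t) := by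
    funext t; simp only [phi3]; ring
  rw [pdq2, hfun]
  exact deriv_affine_div_const_mul_self _ _ _ _ (mul_ne_zero hq₁ hp₁) hq₂

end Partials

theorem phi_preserves_log_canonical_structure_general (b : ℂ) (x : ℂ × ℂ × ℂ × ℂ)
    (h : x.1 * x.2.1 * x.2.2.1 * x.2.2.2 ≠ 0) :
    pbracket (phi1 b) phi2 x = -(phi1 b x * phi2 x) ∧
    pbracket (phi3 b) phi4 x = -(phi3 b x * phi4 x) ∧
    pbracket (phi1 b) (phi3 b) x = 0 ∧
    pbracket (phi1 b) phi4 x = 0 ∧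
    pbracket phi2 (phi3 b) x = 0 ∧
    pbracket phi2 phi4 x = 0 := by
  obtain ⟨q₁, p₁, q₂, p₂⟩ := x
  obtain ⟨⟨⟨hq₁, hp₁⟩, hq₂⟩, hp₂⟩ : ((q₁ ≠ 0 ∧ p₁ ≠ 0) ∧ q₂ ≠ 0) ∧ p₂ ≠ 0 := by
    simpa only [mul_ne_zero_iff] using h
  simp only [pbracket, pdq1_phi1 hq₁ hq₂ hp₂, pdq2_phi1 hq₁ hq₂ hp₂, pdp2_phi1 hq₁ hq₂ hp₂,
    pdq1_phi3 hq₁ hp₁ hq₂, pdp1_phi3 hq₁ hp₁ hq₂, pdq2_phi3 hq₁ hp₁ hq₂]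
  simp only [pdq1, pdp1, pdq2, pdp2, phi1, phi2, phi3, phi4, deriv_const, deriv_id'']
  refine ⟨?_, ?_, ?_, ?_, ?_, ?_⟩ <;> field_simp <;> ring

theorem phi_preserves_log_canonical_structure (b : ℂ) (hb : b ≠ 0) (x : ℂ × ℂ × ℂ × ℂ)
    (h : x.1 * x.2.1 * x.2.2.1 * x.2.2.2 ≠ 0) :
    pbracket (phi1 b) phi2 x = -(phi1 b x * phi2 x) ∧
    pbracket (phi3 b) phi4 x = -(phi3 b x * phi4 x) ∧
    pbracket (phi1 b) (phi3 b) x = 0 ∧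
    pbracket (phi1 b) phi4 x = 0 ∧
    pbracket phi2 (phi3 b) x = 0 ∧
    pbracket phi2 phi4 x = 0 :=
  phi_preserves_log_canonical_structure_general b x h
end

section
/- The singularity of φ on the hypersurface {q₁ = −1/b} is confined after five steps: there exists a nonzero polynomial G ∈ ℂ[u,v,w] such that for every (u,v,w) ∈ ℂ³ with G(u,v,w) ≠ 0 there is δ > 0 such that for all complex ε with 0 < |ε| < δ the five-fold iterate φ⁵(−1/b + ε, u, v, w) is defined (all denominators occurring in the five successive applications of φ are nonzero), and the second component of φ⁵(−1/b + ε, u, v, w) tends to −1/b as ε → 0. -/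
/-- The domain of definition of φ: all denominators are nonzero. -/
def phiDom (x : ℂ × ℂ × ℂ × ℂ) : Prop :=
  x.1 * x.2.1 * x.2.2.1 * x.2.2.2 ≠ 0

/-!
Since `φ (q₁, p₁, q₂, p₂) = (Q₁, q₂, Q₂, q₁)`, an orbit of `φ` is a pair of coupled second-order
recurrences for its `q₁`- and `q₂`-coordinates. Starting from `q₁ = -1/b + ε`, where
`1 + b q₁ = b ε`, these coordinates are explicit rational functions of `ε`: the orbit passes
through `q₂ ~ ε`, then `q₁, q₂ ~ 1/ε`, then `q₁ ~ ε`, after which the singularity has been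
absorbed. Apart from powers of `ε`, numerators and denominators are products of `b, u, v, w`,
`1 + b v` and seven polynomials `p₁, …, p₇` in `ε` whose values at `ε = 0` are, up to sign,
products of `u, v, w`, `b² + b³ v - v w` and `b² (1 + b v)² - v w`. Taking `G` to be the product
of these, all factors stay nonzero for small `ε ≠ 0` off the zero set of `G`, and the second
component of the fifth iterate is a rational function of `ε`, continuous at `0` with value `-1/b`.
-/

open Filter Topology

theorem iterate_phi_eq_of_recurrence (b : ℂ) (a c : ℕ → ℂ) (n : ℕ)
    (ha : ∀ k < n, a (k + 2) = (1 + b * c (k + 1)) / (a (k + 1) * c (k + 1) * a k))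
    (hc : ∀ k < n, c (k + 2) = (1 + b * a (k + 1)) / (a (k + 1) * c k * c (k + 1))) :
    ∀ k ≤ n, (phi b)^[k] (a 1, c 0, c 1, a 0) = (a (k + 1), c k, c (k + 1), a k) := by
  intro k hk
  induction k with
  | zero => rfl
  | succ k ih =>
    rw [Function.iterate_succ_apply', ih (by omega), ha k hk, hc k hk]
    rfl

namespace ConfinementOrbit

variable (b u v w ε : ℂ)

def p₁ : ℂ := b * ε - 1
def p₂ : ℂ := (b * u * v + b ^ 3) * ε - u * v
def p₃ : ℂ := b * v * w * ε + b ^ 2 + b ^ 3 * v - v * w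
def p₄ : ℂ := b ^ 2 * (1 + b * v) * ε + u * p₃ b v w ε * p₁ b ε
def p₅ : ℂ := b * (1 + b * v) * ε + p₂ b u v ε * v * w
def p₆ : ℂ := p₂ b u v ε * p₃ b v w ε * w + b ^ 3 * (1 + b * v) * p₅ b u v w ε
def p₇ : ℂ := u * p₂ b u v ε * p₃ b v w ε + b ^ 3 * ε * p₄ b u v w ε

/- The `q₁`- and `q₂`-coordinates along the orbit of `(-1/b + ε, u, v, w)`, shifted so that the
`k`-th iterate is `(a (k + 1), c k, c (k + 1), a k)`; `a 1 = -1/b + ε` is written as `p₁ / b`.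
Indices beyond `5` carry junk. -/
noncomputable def a : ℕ → ℂ
  | 0 => w
  | 1 => p₁ b ε / b
  | 2 => b * (1 + b * v) / (p₁ b ε * v * w)
  | 3 => p₂ b u v ε * v * w / (b ^ 2 * (1 + b * v) * ε)
  | 4 => b ^ 2 * ε * p₄ b u v w ε / (u * p₂ b u v ε * p₃ b v w ε)
  | 5 => u * p₃ b v w ε * p₆ b u v w ε / (b ^ 2 * v * w * p₄ b u v w ε * p₅ b u v w ε)
  | _ => 0

noncomputable def c : ℕ → ℂ
  | 0 => u
  | 1 => v
  | 2 => b ^ 2 * ε / (p₁ b ε * u * v)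
  | 3 => p₃ b v w ε * p₁ b ε * u / (b ^ 3 * (1 + b * v) * ε)
  | 4 => b ^ 2 * (1 + b * v) * p₅ b u v w ε / (p₂ b u v ε * p₃ b v w ε * w)
  | 5 => p₂ b u v ε * w * p₇ b u v w ε / (b * u * p₁ b ε * p₄ b u v w ε * p₅ b u v w ε)
  | _ => 0

structure Generic : Prop where
  b_ne : b ≠ 0
  u_ne : u ≠ 0
  v_ne : v ≠ 0
  w_ne : w ≠ 0
  one_add_ne : 1 + b * v ≠ 0
  ε_ne : ε ≠ 0
  p₁_ne : p₁ b ε ≠ 0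
  p₂_ne : p₂ b u v ε ≠ 0
  p₃_ne : p₃ b v w ε ≠ 0
  p₄_ne : p₄ b u v w ε ≠ 0
  p₅_ne : p₅ b u v w ε ≠ 0
  p₆_ne : p₆ b u v w ε ≠ 0
  p₇_ne : p₇ b u v w ε ≠ 0

variable {b u v w ε}

section Orbit

variable (h : Generic b u v w ε)
include h

/- After clearing denominators, each step leaves the defining equation of the factor `pᵢ` that
first appears in the new term. -/
theorem a_recurrence (k : ℕ) (hk : k < 4) :
    a b u v w ε (k + 2) = (1 + b * c b u v w ε (k + 1)) /
      (a b u v w ε (k + 1) * c b u v w ε (k + 1) * a b u v w ε k) := by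
  obtain ⟨hb, hu, hv, hw, hB, hε, h₁, h₂, h₃, h₄, h₅, h₆, h₇⟩ := h
  interval_cases k <;> simp only [a, c] <;> field_simp <;>
    simp only [p₁, p₂, p₃, p₄, p₅, p₆] <;> ring

theorem c_recurrence (k : ℕ) (hk : k < 4) :
    c b u v w ε (k + 2) = (1 + b * a b u v w ε (k + 1)) /
      (a b u v w ε (k + 1) * c b u v w ε k * c b u v w ε (k + 1)) := by
  obtain ⟨hb, hu, hv, hw, hB, hε, h₁, h₂, h₃, h₄, h₅, h₆, h₇⟩ := h
  interval_cases k <;> simp only [a, c] <;> field_simp <;>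
    simp only [p₁, p₂, p₃, p₄, p₅, p₇] <;> ring

theorem a_ne_zero (k : ℕ) (hk : k ≤ 5) : a b u v w ε k ≠ 0 := by
  obtain ⟨hb, hu, hv, hw, hB, hε, h₁, h₂, h₃, h₄, h₅, h₆, h₇⟩ := h
  interval_cases k <;> simp [a, *]

theorem c_ne_zero (k : ℕ) (hk : k ≤ 5) : c b u v w ε k ≠ 0 := by
  obtain ⟨hb, hu, hv, hw, hB, hε, h₁, h₂, h₃, h₄, h₅, h₆, h₇⟩ := h
  interval_cases k <;> simp [c, *]

theorem iterate_phi_eq (k : ℕ) (hk : k ≤ 4) :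
    (phi b)^[k] (-1 / b + ε, u, v, w) =
      (a b u v w ε (k + 1), c b u v w ε k, c b u v w ε (k + 1), a b u v w ε k) := by
  have hstart : -1 / b + ε = a b u v w ε 1 := by
    simp only [a, p₁]
    field_simp [h.b_ne]
    ring
  rw [hstart]
  exact iterate_phi_eq_of_recurrence b _ _ 4 (a_recurrence h) (c_recurrence h) k hk

theorem phiDom_iterate_phi (k : ℕ) (hk : k < 5) :
    phiDom ((phi b)^[k] (-1 / b + ε, u, v, w)) := by
  rw [iterate_phi_eq h k (by omega), phiDom]
  simp only [ne_eq, mul_eq_zero, not_or]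
  exact ⟨⟨⟨a_ne_zero h _ (by omega), c_ne_zero h _ (by omega)⟩, c_ne_zero h _ (by omega)⟩,
    a_ne_zero h _ (by omega)⟩

theorem iterate_phi_five_snd :
    ((phi b)^[5] (-1 / b + ε, u, v, w)).2.1 = c b u v w ε 5 := by
  rw [Function.iterate_succ_apply', iterate_phi_eq h 4 le_rfl]
  rfl

end Orbit

open MvPolynomial in
noncomputable def confinementPoly (b : ℂ) : MvPolynomial (Fin 3) ℂ :=
  X 0 * X 1 * X 2 * (1 + C b * X 1) * (C (b ^ 2) + C (b ^ 3) * X 1 - X 1 * X 2) *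
    (C (b ^ 2) * (1 + C b * X 1) ^ 2 - X 1 * X 2)

open MvPolynomial in
theorem confinementPoly_ne_zero (hb : b ≠ 0) : confinementPoly b ≠ 0 := by
  have hconst : ∀ P : MvPolynomial (Fin 3) ℂ, constantCoeff P ≠ 0 → P ≠ 0 :=
    fun P hP h => hP (by rw [h, map_zero])
  refine mul_ne_zero (mul_ne_zero (mul_ne_zero (mul_ne_zero (mul_ne_zero
    (X_ne_zero 0) (X_ne_zero 1)) (X_ne_zero 2)) ?_) ?_) ?_ <;>
  exact hconst _ (by simp [hb])

theorem eval_confinementPoly_ne_zero_iff :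
    MvPolynomial.eval ![u, v, w] (confinementPoly b) ≠ 0 ↔
      u ≠ 0 ∧ v ≠ 0 ∧ w ≠ 0 ∧ 1 + b * v ≠ 0 ∧ b ^ 2 + b ^ 3 * v - v * w ≠ 0 ∧
        b ^ 2 * (1 + b * v) ^ 2 - v * w ≠ 0 := by
  simp [confinementPoly, and_assoc]

section AtZero

variable (b u v w)

@[simp] theorem p₁_zero : p₁ b 0 = -1 := by unfold p₁; ring
@[simp] theorem p₂_zero : p₂ b u v 0 = -(u * v) := by unfold p₂; ring
@[simp] theorem p₃_zero : p₃ b v w 0 = b ^ 2 + b ^ 3 * v - v * w := by unfold p₃; ring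
@[simp] theorem p₄_zero : p₄ b u v w 0 = -(u * (b ^ 2 + b ^ 3 * v - v * w)) := by
  unfold p₄ p₃ p₁; ring
@[simp] theorem p₅_zero : p₅ b u v w 0 = -(u * v ^ 2 * w) := by unfold p₅ p₂; ring
@[simp] theorem p₆_zero : p₆ b u v w 0 = -(u * v * w * (b ^ 2 * (1 + b * v) ^ 2 - v * w)) := by
  unfold p₆ p₅ p₃ p₂; ring
@[simp] theorem p₇_zero : p₇ b u v w 0 = -(u ^ 2 * v * (b ^ 2 + b ^ 3 * v - v * w)) := by
  unfold p₇ p₄ p₃ p₂ p₁; ring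

end AtZero

theorem eventually_generic (hb : b ≠ 0)
    (hG : MvPolynomial.eval ![u, v, w] (confinementPoly b) ≠ 0) :
    ∀ᶠ ε in 𝓝 0, ε ≠ 0 → Generic b u v w ε := by
  obtain ⟨hu, hv, hw, hB, hK₁, hK₂⟩ := eval_confinementPoly_ne_zero_iff.1 hG
  have nonzero_near {f : ℂ → ℂ} (hf : Continuous f) (h0 : f 0 ≠ 0) : ∀ᶠ ε in 𝓝 0, f ε ≠ 0 :=
    hf.continuousAt.eventually_ne h0
  filter_upwards [
    nonzero_near (f := p₁ b) (by unfold p₁; fun_prop) (by simp),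
    nonzero_near (f := p₂ b u v) (by unfold p₂; fun_prop) (by simp [*]),
    nonzero_near (f := p₃ b v w) (by unfold p₃; fun_prop) (by simpa using hK₁),
    nonzero_near (f := p₄ b u v w) (by unfold p₄ p₃ p₁; fun_prop) (by simp [*]),
    nonzero_near (f := p₅ b u v w) (by unfold p₅ p₂; fun_prop) (by simp [*]),
    nonzero_near (f := p₆ b u v w) (by unfold p₆ p₅ p₃ p₂; fun_prop) (by simp [*]),
    nonzero_near (f := p₇ b u v w) (by unfold p₇ p₄ p₃ p₂ p₁; fun_prop) (by simp [*])]
    with ε h₁ h₂ h₃ h₄ h₅ h₆ h₇ hε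
  exact ⟨hb, hu, hv, hw, hB, hε, h₁, h₂, h₃, h₄, h₅, h₆, h₇⟩

theorem tendsto_c_five (hb : b ≠ 0)
    (hG : MvPolynomial.eval ![u, v, w] (confinementPoly b) ≠ 0) :
    Tendsto (fun ε => c b u v w ε 5) (𝓝[≠] 0) (𝓝 (-1 / b)) := by
  obtain ⟨hu, hv, hw, -, hK₁, -⟩ := eval_confinementPoly_ne_zero_iff.1 hG
  have hcont : ContinuousAt (fun ε => c b u v w ε 5) 0 :=
    ContinuousAt.div (by unfold p₇ p₄ p₃ p₂ p₁; fun_prop) (by unfold p₅ p₄ p₃ p₂ p₁; fun_prop)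
      (by simp [*])
  have hvalue : c b u v w 0 5 = -1 / b := by
    simp only [c, p₁_zero, p₂_zero, p₄_zero, p₅_zero, p₇_zero]
    rw [div_eq_div_iff (by simp [*]) hb]
    ring
  exact hvalue ▸ hcont.tendsto.mono_left nhdsWithin_le_nhds

end ConfinementOrbit

open ConfinementOrbit in
theorem singularity_confined_after_five_steps (b : ℂ) (hb : b ≠ 0) :
    ∃ G : MvPolynomial (Fin 3) ℂ, G ≠ 0 ∧
      ∀ u v w : ℂ, MvPolynomial.eval ![u, v, w] G ≠ 0 →
        ∃ δ : ℝ, 0 < δ ∧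
          (∀ ε : ℂ, 0 < ‖ε‖ → ‖ε‖ < δ →
            ∀ k < 5, phiDom ((phi b)^[k] (-1 / b + ε, u, v, w))) ∧
          Filter.Tendsto (fun ε : ℂ => ((phi b)^[5] (-1 / b + ε, u, v, w)).2.1)
            (nhdsWithin 0 {(0 : ℂ)}ᶜ) (nhds (-1 / b)) := by
  refine ⟨confinementPoly b, confinementPoly_ne_zero hb, fun u v w hG => ?_⟩
  have hgeneric := eventually_generic hb hG
  obtain ⟨δ, hδ, hball⟩ := Metric.eventually_nhds_iff.1 hgeneric
  refine ⟨δ, hδ, fun ε hε hεδ => phiDom_iterate_phi (hball (by simpa using hεδ) (norm_pos_iff.1 hε)),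
    (tendsto_c_five hb hG).congr' ?_⟩
  filter_upwards [eventually_nhdsWithin_iff.2 hgeneric] with ε h
  exact (iterate_phi_five_snd h).symm
end

section
/- The powers of the linear map M grow quadratically: there exist real constants c₁ > 0, c₂ > 0 and a natural number N such that for all n ≥ N, c₁·n² ≤ max_{i,j} |(Mⁿ)_{ij}| ≤ c₂·n², where (Mⁿ)_{ij} are the entries of the n-th power of the 32×32 integer matrix representing M. (This expresses the quadratic degree growth, and hence zero algebraic entropy, of the 4-dimensional extension of the q-Painlevé I map.) -/
/-- The lattice L = ℤ³², with basis H_{q₁}, H_{p₁}, H_{q₂}, H_{p₂}, E₁, …, E₂₈. -/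
abbrev L : Type := Fin 32 → ℤ

/-- The i-th standard basis vector (0-indexed). -/
def bv (i : ℕ) : L := fun j => if (j : ℕ) = i then 1 else 0

def Hq1 : L := bv 0
def Hp1 : L := bv 1
def Hq2 : L := bv 2
def Hp2 : L := bv 3

/-- E i, for 1 ≤ i ≤ 28, is the (i+3)-rd basis vector. -/
def E (i : ℕ) : L := bv (i + 3)

/-- Images of the basis vectors under the pushforward map M. -/
def Mimg : Fin 32 → L := fun j =>
  match (j : ℕ) with
  | 0 => Hp2
  | 1 => Hq2 + Hp1 + Hp2
      - (E 8 + E 9 + E 12 + E 15 + E 16 + E 19 + E 21 + E 22 + E 23 + E 25 + E 27)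
  | 2 => Hp1
  | 3 => Hq1 + Hp1 + Hp2
      - (E 1 + E 2 + E 5 + E 7 + E 8 + E 9 + E 11 + E 13 + E 22 + E 23 + E 26)
  | 4 => E 25
  | 5 => Hp2 - (E 22 + E 23 + E 25 + E 26 + E 27)
  | 6 => E 28
  | 7 => E 22
  | 8 => E 27
  | 9 => E 26
  | 10 => E 24
  | 11 => E 6
  | 12 => E 2
  | 13 => E 3
  | 14 => E 4
  | 15 => Hp1 - (E 2 + E 6 + E 15 + E 16 + E 19 + E 22 + E 25)
  | 16 => E 1
  | 17 => Hp2 - E 21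
  | 18 => E 11
  | 19 => Hp1 - (E 8 + E 9 + E 11 + E 12 + E 13)
  | 20 => E 14
  | 21 => E 8
  | 22 => E 13
  | 23 => E 12
  | 24 => E 10
  | 25 => E 20
  | 26 => E 16
  | 27 => E 17
  | 28 => E 18
  | 29 => Hp2 - (E 1 + E 2 + E 5 + E 8 + E 11 + E 16 + E 20)
  | 30 => E 15
  | 31 => Hp1 - E 7
  | _ => 0

/-- The ℤ-linear map M : L → L determined by its values on the basis. -/
def M : L → L := fun v => ∑ j : Fin 32, v j • Mimg j

/-- The 32×32 integer matrix representing M: its (i,j) entry is the i-th coordinate of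
the image under M of the j-th basis vector. -/
def Mmat : Matrix (Fin 32) (Fin 32) ℤ := Matrix.of fun i j => Mimg j i

/-!
A direct computation gives `M¹⁴ = 1 + N` with `N³ = 0` and `N² ≠ 0`. Hence
`M^(14q + r) = M^r (1 + q N + (q choose 2) N²)`, whose entries are `O(n²)`. Conversely the
`(0,0)` entry of `(1 + N)^q` is `1 + 24 q + 56 (q choose 2)`, and since the largest entry is
submultiplicative up to the factor `32`, writing `M^(14q) = M^n M^(14q - n)` with
`0 < 14q - n ≤ 14` transfers this quadratic lower bound to every `n`.
-/

open Finset Filter Asymptotics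

theorem one_add_pow_of_pow_three_eq_zero {R : Type*} [Semiring R] {a : R} (ha : a ^ 3 = 0)
    (n : ℕ) : (1 + a) ^ n = 1 + n • a + n.choose 2 • a ^ 2 := by
  induction n with
  | zero => simp
  | succ n ih =>
    have hc : (n + 1).choose 2 = n.choose 2 + n := by
      rw [Nat.choose_succ_succ', Nat.choose_one_right, add_comm]
    rw [pow_succ, ih, hc]
    simp only [mul_add, add_mul, one_mul, mul_one, smul_mul_assoc, ← sq, ← pow_succ, ha,
      smul_zero, add_zero, add_smul, one_smul]
    abel

namespace Matrix

section MaxNatAbs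

variable {l m n : Type*} [Fintype l] [Fintype m] [Fintype n]

def maxNatAbs (X : Matrix m n ℤ) : ℕ :=
  univ.sup fun p : m × n => (X p.1 p.2).natAbs

theorem natAbs_le_maxNatAbs (X : Matrix m n ℤ) (i : m) (j : n) :
    (X i j).natAbs ≤ X.maxNatAbs :=
  le_sup (f := fun p : m × n => (X p.1 p.2).natAbs) (mem_univ (i, j))

theorem maxNatAbs_le_iff {X : Matrix m n ℤ} {b : ℕ} :
    X.maxNatAbs ≤ b ↔ ∀ i j, (X i j).natAbs ≤ b := by
  simp [maxNatAbs, Prod.forall]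

theorem maxNatAbs_add_le (X Y : Matrix m n ℤ) :
    (X + Y).maxNatAbs ≤ X.maxNatAbs + Y.maxNatAbs :=
  maxNatAbs_le_iff.2 fun i j => (Int.natAbs_add_le _ _).trans <|
    add_le_add (natAbs_le_maxNatAbs X i j) (natAbs_le_maxNatAbs Y i j)

theorem maxNatAbs_nsmul_le (c : ℕ) (X : Matrix m n ℤ) : (c • X).maxNatAbs ≤ c * X.maxNatAbs :=
  maxNatAbs_le_iff.2 fun i j => by
    simpa [Int.natAbs_mul] using Nat.mul_le_mul_left c (natAbs_le_maxNatAbs X i j)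

theorem maxNatAbs_one_le [DecidableEq n] : (1 : Matrix n n ℤ).maxNatAbs ≤ 1 :=
  maxNatAbs_le_iff.2 fun i j => by rw [one_apply]; split_ifs <;> simp

theorem maxNatAbs_mul_le (X : Matrix l m ℤ) (Y : Matrix m n ℤ) :
    (X * Y).maxNatAbs ≤ Fintype.card m * (X.maxNatAbs * Y.maxNatAbs) := by
  refine maxNatAbs_le_iff.2 fun i j => ?_
  calc ((X * Y) i j).natAbs ≤ ∑ k, (X i k * Y k j).natAbs := Int.natAbs_sum_le _ _
    _ ≤ ∑ _k : m, X.maxNatAbs * Y.maxNatAbs := sum_le_sum fun k _ => by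
        rw [Int.natAbs_mul]
        exact Nat.mul_le_mul (natAbs_le_maxNatAbs X i k) (natAbs_le_maxNatAbs Y k j)
    _ = Fintype.card m * (X.maxNatAbs * Y.maxNatAbs) := by simp

end MaxNatAbs

section QuadraticGrowth

variable {n : Type*} [Fintype n] [DecidableEq n] {X A : Matrix n n ℤ}

theorem maxNatAbs_one_add_pow_le (hA : A ^ 3 = 0) (q : ℕ) :
    ((1 + A) ^ q).maxNatAbs ≤ 1 + q * A.maxNatAbs + q.choose 2 * (A ^ 2).maxNatAbs := by
  rw [one_add_pow_of_pow_three_eq_zero hA]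
  refine (maxNatAbs_add_le _ _).trans (add_le_add ((maxNatAbs_add_le _ _).trans ?_) ?_)
  · exact add_le_add maxNatAbs_one_le (maxNatAbs_nsmul_le _ _)
  · exact maxNatAbs_nsmul_le _ _

theorem le_one_add_pow_apply_self (hA : A ^ 3 = 0) {i : n} (hAi : 0 ≤ A i i)
    (hA2i : 0 < (A ^ 2) i i) (q : ℕ) : 1 + (q.choose 2 : ℤ) ≤ ((1 + A) ^ q) i i := by
  rw [one_add_pow_of_pow_three_eq_zero hA]
  simp only [add_apply, smul_apply, one_apply_eq]
  simp only [nsmul_eq_mul]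
  nlinarith [Int.natCast_nonneg q, Int.natCast_nonneg (q.choose 2)]

variable {p : ℕ}

theorem isBigO_maxNatAbs_pow (hp : 0 < p) (hX : X ^ p = 1 + A) (hA : A ^ 3 = 0) :
    (fun k : ℕ => ((X ^ k).maxNatAbs : ℝ)) =O[atTop] fun k => (k : ℝ) ^ 2 := by
  set K := (range p).sup fun r => (X ^ r).maxNatAbs
  set C := Fintype.card n * K * (1 + A.maxNatAbs + (A ^ 2).maxNatAbs)
  refine IsBigO.of_bound C (eventually_atTop.2 ⟨1, fun k hk => ?_⟩)
  simp only [norm_pow, RCLike.norm_natCast]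
  have hq : k / p ≤ k ^ 2 := (Nat.div_le_self k p).trans (Nat.le_self_pow two_ne_zero k)
  have hq2 : (k / p).choose 2 ≤ k ^ 2 :=
    (Nat.choose_le_pow _ _).trans (Nat.pow_le_pow_left (Nat.div_le_self k p) 2)
  have h1 : 1 ≤ k ^ 2 := Nat.one_le_pow _ _ hk
  have hbound : (X ^ k).maxNatAbs ≤ C * k ^ 2 := calc
    (X ^ k).maxNatAbs = (X ^ (k % p) * (1 + A) ^ (k / p)).maxNatAbs := by
      rw [← hX, ← pow_mul, ← pow_add, Nat.mod_add_div]
    _ ≤ Fintype.card n * ((X ^ (k % p)).maxNatAbs * ((1 + A) ^ (k / p)).maxNatAbs) :=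
      maxNatAbs_mul_le _ _
    _ ≤ Fintype.card n * (K * (k ^ 2 + k ^ 2 * A.maxNatAbs + k ^ 2 * (A ^ 2).maxNatAbs)) := by
      gcongr
      · exact le_sup (f := fun r => (X ^ r).maxNatAbs) (mem_range.2 (Nat.mod_lt k hp))
      · refine (maxNatAbs_one_add_pow_le hA _).trans ?_
        gcongr
    _ = C * k ^ 2 := by ring
  exact_mod_cast hbound

theorem isBigO_sq_maxNatAbs_pow (hp : 0 < p) (hX : X ^ p = 1 + A) (hA : A ^ 3 = 0) {i : n}
    (hAi : 0 ≤ A i i) (hA2i : 0 < (A ^ 2) i i) :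
    (fun k : ℕ => (k : ℝ) ^ 2) =O[atTop] fun k => ((X ^ k).maxNatAbs : ℝ) := by
  set K := (range (p + 1)).sup fun r => (X ^ r).maxNatAbs
  refine IsBigO.of_bound (4 * p ^ 2 * (Fintype.card n * K)) (Eventually.of_forall fun k => ?_)
  simp only [norm_pow, RCLike.norm_natCast]
  set q := k / p + 1
  have hkq : k < p * q := Nat.lt_mul_div_succ k hp
  have hgrow : 1 + q.choose 2 ≤ (X ^ (p * q)).maxNatAbs := by
    have h := (le_one_add_pow_apply_self hA hAi hA2i q).trans Int.le_natAbs
    rw [pow_mul, hX]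
    exact (Int.ofNat_le.1 h).trans (natAbs_le_maxNatAbs _ i i)
  have hsub : (X ^ (p * q)).maxNatAbs ≤ Fintype.card n * ((X ^ k).maxNatAbs * K) := by
    have hpq : p * q = p * (k / p) + p := by rw [mul_add, mul_one]
    have hdiv := Nat.mul_div_le k p
    rw [← Nat.add_sub_of_le hkq.le, pow_add]
    refine (maxNatAbs_mul_le _ _).trans ?_
    gcongr
    exact le_sup (f := fun r => (X ^ r).maxNatAbs) (mem_range.2 (by omega))
  have hq : (q : ℝ) ^ 2 ≤ 4 * ((1 + q.choose 2 : ℕ) : ℝ) := by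
    push_cast
    rw [Nat.cast_choose_two]
    nlinarith [sq_nonneg ((q : ℝ) - 2)]
  calc (k : ℝ) ^ 2 ≤ ((p * q : ℕ) : ℝ) ^ 2 := by gcongr
    _ = (p : ℝ) ^ 2 * (q : ℝ) ^ 2 := by push_cast; ring
    _ ≤ (p : ℝ) ^ 2 * (4 * ((1 + q.choose 2 : ℕ) : ℝ)) := by gcongr
    _ ≤ (p : ℝ) ^ 2 * (4 * ((Fintype.card n * ((X ^ k).maxNatAbs * K) : ℕ) : ℝ)) := by
      gcongr
      exact hgrow.trans hsub
    _ = 4 * p ^ 2 * (Fintype.card n * K) * (X ^ k).maxNatAbs := by push_cast; ring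

theorem isTheta_maxNatAbs_pow (hp : 0 < p) (hX : X ^ p = 1 + A) (hA : A ^ 3 = 0) {i : n}
    (hAi : 0 ≤ A i i) (hA2i : 0 < (A ^ 2) i i) :
    (fun k : ℕ => ((X ^ k).maxNatAbs : ℝ)) =Θ[atTop] fun k => (k : ℝ) ^ 2 :=
  ⟨isBigO_maxNatAbs_pow hp hX hA, isBigO_sq_maxNatAbs_pow hp hX hA hAi hA2i⟩

end QuadraticGrowth

end Matrix

def Nmat : Matrix (Fin 32) (Fin 32) ℤ := Mmat ^ 14 - 1

theorem Nmat_spec : Nmat ^ 3 = 0 ∧ 0 ≤ Nmat 0 0 ∧ 0 < (Nmat ^ 2) 0 0 := by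
  -- Bracketing `M¹⁴` as `(M³ M³ M)²` lets the kernel evaluate it with five matrix products, and
  -- deciding the three facts together shares that evaluation between them.
  have hpow : Mmat ^ 14 = Mmat * Mmat * Mmat * (Mmat * Mmat * Mmat) * Mmat *
      (Mmat * Mmat * Mmat * (Mmat * Mmat * Mmat) * Mmat) := by
    simp only [pow_succ, pow_zero, one_mul, mul_assoc]
  rw [Nmat, hpow, pow_three, sq]
  decide +kernel

theorem M_powers_grow_quadratically :
    ∃ c₁ c₂ : ℝ, 0 < c₁ ∧ 0 < c₂ ∧ ∃ N : ℕ, ∀ n : ℕ, N ≤ n →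
      c₁ * (n : ℝ) ^ 2
          ≤ ((Finset.univ.sup fun p : Fin 32 × Fin 32 => ((Mmat ^ n) p.1 p.2).natAbs : ℕ) : ℝ) ∧
      ((Finset.univ.sup fun p : Fin 32 × Fin 32 => ((Mmat ^ n) p.1 p.2).natAbs : ℕ) : ℝ)
          ≤ c₂ * (n : ℝ) ^ 2 := by
  obtain ⟨hN3, hN0, hN2⟩ := Nmat_spec
  have hθ := Matrix.isTheta_maxNatAbs_pow (by norm_num : 0 < 14)
    (add_sub_cancel 1 (Mmat ^ 14)).symm hN3 hN0 hN2
  obtain ⟨c₂, hc₂, hupper⟩ := hθ.1.exists_pos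
  obtain ⟨c, hc, hlower⟩ := hθ.2.exists_pos
  obtain ⟨N, hN⟩ := eventually_atTop.1 (hupper.bound.and hlower.bound)
  refine ⟨c⁻¹, c₂, inv_pos.2 hc, hc₂, N, fun n hn => ?_⟩
  have h := hN n hn
  simp only [norm_pow, RCLike.norm_natCast] at h
  exact ⟨(inv_mul_le_iff₀ hc).2 h.2, h.1⟩
end

section
/- The birational map R₀ realizing the affine Weyl group generator r₀ is an involution: for every point ((q₁,p₁,q₂,p₂),(b₃,b₇,b₁₀,b₁₄,b₁₇,b₂₁,b₂₄,b₂₈)) ∈ ℂ⁴ × (ℂ∖{0})⁸ at which both R₀ and R₀∘R₀ are defined (all denominators occurring in the two applications are nonzero), one has R₀(R₀((q₁,p₁,q₂,p₂),(b₃,…,b₂₈))) = ((q₁,p₁,q₂,p₂),(b₃,…,b₂₈)). -/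
/-- The birational map R₀ realizing the generator r₀, acting on coordinates
(q₁,p₁,q₂,p₂) and parameters (b₃,b₇,b₁₀,b₁₄,b₁₇,b₂₁,b₂₄,b₂₈) (indexed 0,…,7 in
this order).  Coordinates map to (q₂, (1 − b₂₈⁻¹q₂)/(q₁q₂p₂), q₁, (1 − b₁₄⁻¹q₁)/(q₁p₁q₂)),
parameters to (b₂₁⁻¹, b₁₇⁻¹, b₁₀⁻¹b₁₄⁻¹b₂₈⁻¹, b₂₈, b₇⁻¹, b₃⁻¹, b₁₄⁻¹b₂₄⁻¹b₂₈⁻¹, b₁₄). -/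
noncomputable def R0 : (ℂ × ℂ × ℂ × ℂ) × (Fin 8 → ℂ) → (ℂ × ℂ × ℂ × ℂ) × (Fin 8 → ℂ) :=
  fun P =>
    ((P.1.2.2.1,
      (1 - (P.2 7)⁻¹ * P.1.2.2.1) / (P.1.1 * P.1.2.2.1 * P.1.2.2.2),
      P.1.1,
      (1 - (P.2 3)⁻¹ * P.1.1) / (P.1.1 * P.1.2.1 * P.1.2.2.1)),
     ![(P.2 5)⁻¹, (P.2 4)⁻¹, (P.2 2)⁻¹ * (P.2 3)⁻¹ * (P.2 7)⁻¹, P.2 7,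
       (P.2 1)⁻¹, (P.2 0)⁻¹, (P.2 3)⁻¹ * (P.2 6)⁻¹ * (P.2 7)⁻¹, P.2 3])

private lemma cv0 {α : Type*} (a0 a1 a2 a3 a4 a5 a6 a7 : α) :
    ![a0,a1,a2,a3,a4,a5,a6,a7] 0 = a0 := rfl
private lemma cv1 {α : Type*} (a0 a1 a2 a3 a4 a5 a6 a7 : α) :
    ![a0,a1,a2,a3,a4,a5,a6,a7] 1 = a1 := rfl
private lemma cv2 {α : Type*} (a0 a1 a2 a3 a4 a5 a6 a7 : α) :
    ![a0,a1,a2,a3,a4,a5,a6,a7] 2 = a2 := rfl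
private lemma cv3 {α : Type*} (a0 a1 a2 a3 a4 a5 a6 a7 : α) :
    ![a0,a1,a2,a3,a4,a5,a6,a7] 3 = a3 := rfl
private lemma cv4 {α : Type*} (a0 a1 a2 a3 a4 a5 a6 a7 : α) :
    ![a0,a1,a2,a3,a4,a5,a6,a7] 4 = a4 := rfl
private lemma cv5 {α : Type*} (a0 a1 a2 a3 a4 a5 a6 a7 : α) :
    ![a0,a1,a2,a3,a4,a5,a6,a7] 5 = a5 := rfl
private lemma cv6 {α : Type*} (a0 a1 a2 a3 a4 a5 a6 a7 : α) :
    ![a0,a1,a2,a3,a4,a5,a6,a7] 6 = a6 := rfl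
private lemma cv7 {α : Type*} (a0 a1 a2 a3 a4 a5 a6 a7 : α) :
    ![a0,a1,a2,a3,a4,a5,a6,a7] 7 = a7 := rfl

/- STATEMENT 17: R₀ is an involution at every point where both applications are
defined (all coordinates nonzero, i.e. all denominators occurring nonzero, and all
parameters nonzero). -/
theorem R0_is_involution (q1 p1 q2 p2 : ℂ) (b : Fin 8 → ℂ) (hb : ∀ i, b i ≠ 0)
    (hdom : q1 * q2 * p1 * p2 ≠ 0)
    (hdom' : (R0 ((q1, p1, q2, p2), b)).1.1 * (R0 ((q1, p1, q2, p2), b)).1.2.2.1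
        * (R0 ((q1, p1, q2, p2), b)).1.2.1 * (R0 ((q1, p1, q2, p2), b)).1.2.2.2 ≠ 0) :
    R0 (R0 ((q1, p1, q2, p2), b)) = ((q1, p1, q2, p2), b) := by
  have hq1 : q1 ≠ 0 := fun h => hdom (by rw [h]; ring)
  have hq2 : q2 ≠ 0 := fun h => hdom (by rw [h]; ring)
  have hp1 : p1 ≠ 0 := fun h => hdom (by rw [h]; ring)
  have hp2 : p2 ≠ 0 := fun h => hdom (by rw [h]; ring)
  have h3 : (1 - (b 3)⁻¹ * q1) ≠ 0 := fun h => hdom' (by simp [R0, h])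
  have h7 : (1 - (b 7)⁻¹ * q2) ≠ 0 := fun h => hdom' (by simp [R0, h])
  have hb0 := hb 0; have hb1 := hb 1; have hb2 := hb 2; have hb3 := hb 3
  have hb4 := hb 4; have hb5 := hb 5; have hb6 := hb 6; have hb7 := hb 7
  simp only [R0, cv0, cv1, cv2, cv3, cv4, cv5, cv6, cv7]
  refine Prod.ext ?_ ?_
  · refine Prod.ext rfl (Prod.ext ?_ (Prod.ext rfl ?_))
    · rw [show q2 * q1 * ((1 - (b 3)⁻¹ * q1) / (q1 * p1 * q2))
          = (1 - (b 3)⁻¹ * q1) / p1 from by field_simp]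
      exact div_div_cancel₀ h3
    · rw [show q2 * ((1 - (b 7)⁻¹ * q2) / (q1 * q2 * p2)) * q1
          = (1 - (b 7)⁻¹ * q2) / p2 from by field_simp]
      exact div_div_cancel₀ h7
  · funext i
    fin_cases i <;>
      simp only [cv0, cv1, cv2, cv3, cv4, cv5, cv6, cv7, inv_inv, Fin.isValue] <;>
      field_simp <;> rfl
end

section
/- The lattice reflections and the diagram automorphism satisfy the defining relations of the second factor of the extended affine Weyl group W̃(A₁⁽¹⁾) × W̃(A₁⁽¹⁾): r₂∘r₂ = id, r₃∘r₃ = id, σ∘σ = id, and r₂∘σ = σ∘r₃ as ℤ-linear maps L → L. -/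
/-- The N\'eron-Severi pairing ⟨F,f⟩ = Σ_{i=1}^{4} Fᵢfᵢ − Σ_{k=5}^{32} F_k f_k. -/
def pairNS (F f : Fin 32 → ℤ) : ℤ :=
  ∑ i : Fin 32, if (i : ℕ) < 4 then F i * f i else -(F i * f i)

/-- Simple root α₂. -/
def α2 : L :=
  Hq1 + Hp1 + Hq2 + Hp2
    - (E 1 + E 2 + E 4 + E 5 + E 7 + E 8 + E 9 + E 11 + E 12 + E 14 + E 15 + E 16
        + E 17 + E 20 + E 22 + E 23 + E 24 + E 27)

/-- Simple root α₃. -/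
def α3 : L :=
  Hq1 + Hp1 + Hq2 + Hp2
    - (E 1 + E 2 + E 3 + E 6 + E 8 + E 9 + E 10 + E 13 + E 15 + E 16 + E 18 + E 19
        + E 21 + E 22 + E 23 + E 25 + E 26 + E 28)

/-- Simple coroot α₂∨ (in the dual lattice L', identified with Fin 32 → ℤ). -/
def α2v : Fin 32 → ℤ :=
  bv 0 + bv 1 + bv 2 + bv 3
    - (bv (7 + 3) + bv (14 + 3) + bv (16 + 3) + bv (17 + 3) + bv (23 + 3) + bv (24 + 3))

/-- Simple coroot α₃∨. -/
def α3v : Fin 32 → ℤ :=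
  bv 0 + bv 1 + bv 2 + bv 3
    - (bv (2 + 3) + bv (3 + 3) + bv (9 + 3) + bv (10 + 3) + bv (21 + 3) + bv (28 + 3))

/-- The reflection r₂(F) = F + ⟨F, α₂∨⟩·α₂. -/
def r2 : L → L := fun F => F + pairNS F α2v • α2

/-- The reflection r₃(F) = F + ⟨F, α₃∨⟩·α₃. -/
def r3 : L → L := fun F => F + pairNS F α3v • α3

/-- The index involution realising the basis permutation
H_{q₁} ↔ H_{q₂}, H_{p₁} ↔ H_{p₂}, Eᵢ ↔ E_{i+14} (1 ≤ i ≤ 14). -/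
def σidx : Fin 32 → Fin 32 :=
  ![2, 3, 0, 1,
    18, 19, 20, 21, 22, 23, 24, 25, 26, 27, 28, 29, 30, 31,
    4, 5, 6, 7, 8, 9, 10, 11, 12, 13, 14, 15, 16, 17]

/-- The diagram automorphism σ, permuting the basis by
H_{q₁} ↔ H_{q₂}, H_{p₁} ↔ H_{p₂}, Eᵢ ↔ E_{i+14} (1 ≤ i ≤ 14). -/
def σmap : L → L := fun v j => v (σidx j)

/- STATEMENT 19: the relations of the second factor of W̃(A₁⁽¹⁾) × W̃(A₁⁽¹⁾):
r₂² = r₃² = σ² = id and r₂∘σ = σ∘r₃. -/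

set_option maxHeartbeats 1000000

lemma α2v_eq : α2v = ![1,1,1,1, 0,0,0,0,0,0,-1,0,0,0,0,0,0,-1,0,-1,-1,0,0,0,0,0,-1,-1,0,0,0,0] := by
  funext j; fin_cases j <;> rfl

lemma α3v_eq : α3v = ![1,1,1,1, 0,-1,-1,0,0,0,0,0,-1,-1,0,0,0,0,0,0,0,0,0,0,-1,0,0,0,0,0,0,-1] := by
  funext j; fin_cases j <;> rfl

lemma pair2 (F : L) : pairNS F α2v =
    F 0 + F 1 + F 2 + F 3 + F 10 + F 17 + F 19 + F 20 + F 26 + F 27 := by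
  simp [pairNS, α2v, bv, Fin.sum_univ_succ]
  ring!

lemma pair3 (F : L) : pairNS F α3v =
    F 0 + F 1 + F 2 + F 3 + F 5 + F 6 + F 12 + F 13 + F 24 + F 31 := by
  simp [pairNS, α3v, bv, Fin.sum_univ_succ]
  ring!

lemma pair2_lin (F : L) (c : ℤ) : pairNS (F + c • α2) α2v = pairNS F α2v - 2 * c := by
  simp only [pair2, Pi.add_apply, Pi.smul_apply, smul_eq_mul,
    show α2 0 = 1 from rfl, show α2 1 = 1 from rfl, show α2 2 = 1 from rfl,
    show α2 3 = 1 from rfl, show α2 10 = -1 from rfl, show α2 17 = -1 from rfl,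
    show α2 19 = -1 from rfl, show α2 20 = -1 from rfl, show α2 26 = -1 from rfl,
    show α2 27 = -1 from rfl]
  ring

lemma pair3_lin (F : L) (c : ℤ) : pairNS (F + c • α3) α3v = pairNS F α3v - 2 * c := by
  simp only [pair3, Pi.add_apply, Pi.smul_apply, smul_eq_mul,
    show α3 0 = 1 from rfl, show α3 1 = 1 from rfl, show α3 2 = 1 from rfl,
    show α3 3 = 1 from rfl, show α3 5 = -1 from rfl, show α3 6 = -1 from rfl,
    show α3 12 = -1 from rfl, show α3 13 = -1 from rfl, show α3 24 = -1 from rfl,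
    show α3 31 = -1 from rfl]
  ring

lemma sigma_alpha3 : σmap α3 = α2 := by
  funext j
  fin_cases j <;> rfl

lemma pair_sigma (F : L) : pairNS (σmap F) α2v = pairNS F α3v := by
  simp only [pair2, pair3, σmap,
    show σidx 0 = 2 from rfl, show σidx 1 = 3 from rfl, show σidx 2 = 0 from rfl,
    show σidx 3 = 1 from rfl, show σidx 10 = 24 from rfl, show σidx 17 = 31 from rfl,
    show σidx 19 = 5 from rfl, show σidx 20 = 6 from rfl, show σidx 26 = 12 from rfl,
    show σidx 27 = 13 from rfl]
  ring

theorem weyl_group_relations_second_factor :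
    r2 ∘ r2 = id ∧ r3 ∘ r3 = id ∧ σmap ∘ σmap = id ∧ r2 ∘ σmap = σmap ∘ r3 := by
  refine ⟨?_, ?_, ?_, ?_⟩
  · funext F
    show r2 (r2 F) = F
    unfold r2
    rw [pair2_lin]
    module
  · funext F
    show r3 (r3 F) = F
    unfold r3
    rw [pair3_lin]
    module
  · funext F j
    show F (σidx (σidx j)) = F j
    congr 1
    fin_cases j <;> rfl
  · funext F
    show r2 (σmap F) = σmap (r3 F)
    unfold r2 r3
    have h1 : σmap (F + pairNS F α3v • α3) = σmap F + pairNS F α3v • σmap α3 := rfl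
    rw [h1, sigma_alpha3, pair_sigma]
end
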